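/- Let B ∈ ℂ^{d×d} satisfy B*·P₁·B = P₁, let V := Q₊ + Q₋·B (invertible) and U := (Q₊·B + Q₋)·V⁻¹ (unitary). Then for every y ∈ ℂ^d one has ‖y‖² ≤ ‖V‖²·(n₊(y)² + n₋(Uy)²) and ‖y‖² ≤ ‖B⁻¹‖²·‖V‖²·(n₊(Uy)² + n₋(y)²), where ‖·‖ denotes the Euclidean norm on ℂ^d and the spectral norm on matrices. -/

import Mathlib

/-!
Everything in sight is a function of `P₁`: by uniqueness of positive square roots,
`|P₁|`, `Q₊`, `Q₋`, `P₊`, `P₋` and `P₁⁻¹` are obtained from `P₁` by the continuous functional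
calculus, so all relations between them reduce to identities of real functions on the spectrum
of `P₁`, which avoids `0`. With `M₊ := P₁⁻¹P₊` and `M₋ := P₁⁻¹P₋` these give `Q₊Q₋ = 0`,
`M₊Q₋ = Q₋M₊ = 0`, `Q₊M₊Q₊ = P₊`, `M₋Q₊ = Q₊M₋ = 0` and `Q₋M₋Q₋ = -P₋`. Expanding, for
`W := Q₊B + Q₋` one gets `V*M₊V = P₊`, `W*M₋W = -P₋`, `W*M₊W = B*P₊B` and `V*M₋V = -B*P₋B`.
Writing `y = Vx`, so that `Uy = Wx`, this says `n₊(y)² + n₋(Uy)² = ‖x‖²` and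
`n₊(Uy)² + n₋(y)² = ‖Bx‖²`; the estimates follow from `‖y‖ ≤ ‖V‖‖x‖` and `‖x‖ ≤ ‖B⁻¹‖‖Bx‖`.

`V` is invertible: if `Vx = 0`, applying `Q₋` gives `Q₋²Bx = 0`, so `Q₋Bx = 0` and `Q₊x = 0`;
then `B*P₁B = P₁` with `P₁ = Q₊² - Q₋²` reads `-‖Q₋x‖² = ‖Q₊Bx‖²`, so `Q₋x = 0` as well and
`|P₁|x = (Q₊² + Q₋²)x = 0`.
-/

open Matrix

noncomputable section

/-- The spectral (ℓ²-operator) norm of a square complex matrix. -/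
def specNormC {d : ℕ} (A : Matrix (Fin d) (Fin d) ℂ) : ℝ :=
  ‖Matrix.toEuclideanCLM (𝕜 := ℂ) A‖

/-- The Euclidean norm of a vector in `ℂ^d`. -/
def euclNormC {d : ℕ} (x : Fin d → ℂ) : ℝ :=
  ‖(WithLp.equiv 2 (Fin d → ℂ)).symm x‖

open scoped MatrixOrder ComplexOrder

/- `Q₊ = qPos(P₁)`, `Q₋ = qNeg(P₁)`, `P₊ = pPos(P₁)` and `P₋ = pNeg(P₁)`. At `t = 0` (never in
the spectrum of the invertible `P₁`) `pPos` and `pNeg` take the junk value `1/2`, as `0⁻¹ = 0`. -/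
def qPos (t : ℝ) : ℝ := √(2⁻¹ * (|t| + t))

def qNeg (t : ℝ) : ℝ := √(2⁻¹ * (|t| - t))

def pPos (t : ℝ) : ℝ := 2⁻¹ * (1 + |t|⁻¹ * t)

def pNeg (t : ℝ) : ℝ := 2⁻¹ * (1 - |t|⁻¹ * t)

lemma qPos_mul_self (t : ℝ) : qPos t * qPos t = 2⁻¹ * (|t| + t) :=
  Real.mul_self_sqrt (by linarith [neg_abs_le t])

lemma qNeg_mul_self (t : ℝ) : qNeg t * qNeg t = 2⁻¹ * (|t| - t) :=
  Real.mul_self_sqrt (by linarith [le_abs_self t])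

lemma qPos_mul_qNeg (t : ℝ) : qPos t * qNeg t = 0 := by
  rcases le_total t 0 with h | h <;> simp [qPos, qNeg, abs_of_nonpos, abs_of_nonneg, h]

lemma inv_mul_pPos_mul_qNeg (t : ℝ) : t⁻¹ * pPos t * qNeg t = 0 := by
  rcases lt_or_ge t 0 with h | h
  · simp [pPos, abs_of_neg h, h.ne]
  · simp [qNeg, abs_of_nonneg h]

lemma inv_mul_pNeg_mul_qPos (t : ℝ) : t⁻¹ * pNeg t * qPos t = 0 := by
  rcases le_or_gt t 0 with h | h
  · simp [qPos, abs_of_nonpos h]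
  · simp [pNeg, abs_of_pos h, h.ne']

lemma qPos_mul_inv_mul_pPos_mul_qPos {t : ℝ} (ht : t ≠ 0) :
    qPos t * (t⁻¹ * pPos t) * qPos t = pPos t := by
  rcases ht.lt_or_gt with h | h
  · simp [pPos, abs_of_neg h, h.ne]
  · rw [mul_right_comm, qPos_mul_self, pPos, abs_of_pos h]
    field_simp
    ring

lemma qNeg_mul_inv_mul_pNeg_mul_qNeg {t : ℝ} (ht : t ≠ 0) :
    qNeg t * (t⁻¹ * pNeg t) * qNeg t = -pNeg t := by
  rcases ht.lt_or_gt with h | h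
  · rw [mul_right_comm, qNeg_mul_self, pNeg, abs_of_neg h]
    field_simp
    ring
  · simp [pNeg, abs_of_pos h, h.ne']

section FunctionalCalculus

/- The spectrum of a matrix is finite, so every function is continuous on it: the primed lemmas
are the unprimed ones without their continuity hypotheses. -/

variable {𝕜 : Type*} [RCLike 𝕜] {n : Type*} [Fintype n] [DecidableEq n] {A : Matrix n n 𝕜}

lemma Matrix.cfc_mul' (f g : ℝ → ℝ) : cfc (fun t => f t * g t) A = cfc f A * cfc g A :=
  cfc_mul f g A (A.finite_real_spectrum.continuousOn f) (A.finite_real_spectrum.continuousOn g)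

lemma Matrix.cfc_add' (f g : ℝ → ℝ) : cfc (fun t => f t + g t) A = cfc f A + cfc g A :=
  cfc_add A f g (A.finite_real_spectrum.continuousOn f) (A.finite_real_spectrum.continuousOn g)

lemma Matrix.cfc_sub' (f g : ℝ → ℝ) : cfc (fun t => f t - g t) A = cfc f A - cfc g A :=
  cfc_sub f g A (A.finite_real_spectrum.continuousOn f) (A.finite_real_spectrum.continuousOn g)

lemma Matrix.cfc_const_mul' (r : ℝ) (f : ℝ → ℝ) : cfc (fun t => r * f t) A = r • cfc f A :=
  cfc_const_mul r f A (A.finite_real_spectrum.continuousOn f)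

lemma Matrix.ne_zero_of_mem_spectrum (hA : IsUnit A) {t : ℝ} (ht : t ∈ spectrum ℝ A) : t ≠ 0 :=
  fun h0 => (spectrum.zero_notMem_iff ℝ).mpr hA (h0 ▸ ht)

lemma Matrix.inv_cfc {g : ℝ → ℝ} (hA : IsSelfAdjoint A) (hg : ∀ t ∈ spectrum ℝ A, g t ≠ 0) :
    (cfc g A)⁻¹ = cfc (fun t => (g t)⁻¹) A := by
  refine inv_eq_left_inv ?_
  rw [← cfc_mul', ← cfc_one ℝ A]
  exact cfc_congr fun t ht => inv_mul_cancel₀ (hg t ht)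

lemma Matrix.inv_eq_cfc (hA : IsSelfAdjoint A) (hu : IsUnit A) :
    A⁻¹ = cfc (fun t : ℝ => t⁻¹) A := by
  conv_lhs => rw [← cfc_id' ℝ A]
  exact inv_cfc hA fun t ht => ne_zero_of_mem_spectrum hu ht

lemma Matrix.inv_mul_cfc (hA : IsSelfAdjoint A) (hu : IsUnit A) (f : ℝ → ℝ) :
    A⁻¹ * cfc f A = cfc (fun t => t⁻¹ * f t) A := by
  rw [inv_eq_cfc hA hu, ← cfc_mul']

lemma Matrix.cfc_pPos (hA : IsSelfAdjoint A) (hu : IsUnit A) :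
    cfc pPos A = (2 : ℝ)⁻¹ • (1 + (cfc (fun t : ℝ => |t|) A)⁻¹ * A) := by
  rw [inv_cfc hA fun t ht => abs_ne_zero.mpr (ne_zero_of_mem_spectrum hu ht)]
  unfold pPos
  rw [cfc_const_mul', cfc_add', cfc_const_one ℝ A, cfc_mul', cfc_id' ℝ A]

lemma Matrix.cfc_pNeg (hA : IsSelfAdjoint A) (hu : IsUnit A) :
    cfc pNeg A = (2 : ℝ)⁻¹ • (1 - (cfc (fun t : ℝ => |t|) A)⁻¹ * A) := by
  rw [inv_cfc hA fun t ht => abs_ne_zero.mpr (ne_zero_of_mem_spectrum hu ht)]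
  unfold pNeg
  rw [cfc_const_mul', cfc_sub', cfc_const_one ℝ A, cfc_mul', cfc_id' ℝ A]

end FunctionalCalculus

section RealMatrix

variable {n : Type*} [Fintype n] [DecidableEq n] {P Q : Matrix n n ℝ}

lemma Matrix.eq_cfc_sqrt_of_mul_self_eq {f : ℝ → ℝ} (hQ : Q.PosSemidef)
    (hf : ∀ t ∈ spectrum ℝ P, 0 ≤ f t) (h : Q * Q = cfc f P) :
    Q = cfc (fun t => √(f t)) P := by
  rw [← CFC.mul_self_eq_mul_self_iff Q _ hQ.nonneg (cfc_nonneg fun t _ => Real.sqrt_nonneg _),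
    h, ← cfc_mul']
  exact cfc_congr fun t ht => (Real.mul_self_sqrt (hf t ht)).symm

lemma Matrix.eq_cfc_abs_of_sq_eq_sq (hP : IsSelfAdjoint P) (hQ : Q.PosSemidef) (h : Q ^ 2 = P ^ 2) :
    Q = cfc (fun t : ℝ => |t|) P := by
  have := eq_cfc_sqrt_of_mul_self_eq hQ (fun t _ => mul_self_nonneg t)
    (by rw [← sq, h, sq, cfc_mul', cfc_id' ℝ P])
  simpa only [Real.sqrt_mul_self_eq_abs] using this

lemma Matrix.eq_cfc_qPos (hP : IsSelfAdjoint P) (hQ : Q.PosSemidef)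
    (h : Q ^ 2 = (2 : ℝ)⁻¹ • (cfc (fun t : ℝ => |t|) P + P)) : Q = cfc qPos P :=
  eq_cfc_sqrt_of_mul_self_eq hQ (fun t _ => by linarith [neg_abs_le t])
    (by rw [← sq, h, cfc_const_mul', cfc_add', cfc_id' ℝ P])

lemma Matrix.eq_cfc_qNeg (hP : IsSelfAdjoint P) (hQ : Q.PosSemidef)
    (h : Q ^ 2 = (2 : ℝ)⁻¹ • (cfc (fun t : ℝ => |t|) P - P)) : Q = cfc qNeg P :=
  eq_cfc_sqrt_of_mul_self_eq hQ (fun t _ => by linarith [le_abs_self t])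
    (by rw [← sq, h, cfc_const_mul', cfc_sub', cfc_id' ℝ P])

def Matrix.ofRealStarAlgHom : Matrix n n ℝ →⋆ₐ[ℝ] Matrix n n ℂ where
  toAlgHom := Complex.ofRealAm.mapMatrix
  map_star' M := by ext; simp

lemma Matrix.map_ofReal_cfc (f : ℝ → ℝ) (hP : P.IsHermitian) :
    (cfc f P).map Complex.ofReal = cfc f (P.map Complex.ofReal) :=
  StarAlgHom.map_cfc ofRealStarAlgHom f P (P.finite_spectrum.continuousOn _)
    (LinearMap.continuous_of_finiteDimensional ofRealStarAlgHom.toLinearMap) hP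

end RealMatrix

section ConjTranspose

variable {n : Type*} [Fintype n] {R : Type*} [CommRing R] [StarRing R]

lemma Matrix.conjTranspose_add_mul_mul_add_mul {A C M : Matrix n n R} (B : Matrix n n R)
    (hMC : M * C = 0) (hCM : Cᴴ * M = 0) :
    (A + C * B)ᴴ * M * (A + C * B) = Aᴴ * M * A := by
  rw [conjTranspose_add, conjTranspose_mul]
  calc (Aᴴ + Bᴴ * Cᴴ) * M * (A + C * B)
      = Aᴴ * M * A + Aᴴ * (M * C) * B + Bᴴ * (Cᴴ * M) * A + Bᴴ * (Cᴴ * M) * C * B := by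
        noncomm_ring
    _ = Aᴴ * M * A := by rw [hMC, hCM]; noncomm_ring

lemma Matrix.conjTranspose_mul_add_mul_mul_add {A C M : Matrix n n R} (B : Matrix n n R)
    (hMC : M * C = 0) (hCM : Cᴴ * M = 0) :
    (A * B + C)ᴴ * M * (A * B + C) = Bᴴ * (Aᴴ * M * A) * B := by
  rw [conjTranspose_add, conjTranspose_mul]
  calc (Bᴴ * Aᴴ + Cᴴ) * M * (A * B + C)
      = Bᴴ * (Aᴴ * M * A) * B + Bᴴ * Aᴴ * (M * C) + Cᴴ * M * A * B + Cᴴ * M * C := by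
        noncomm_ring
    _ = Bᴴ * (Aᴴ * M * A) * B := by rw [hMC, hCM]; noncomm_ring

lemma Matrix.star_mulVec_dotProduct_mulVec (A M : Matrix n n R) (x : n → R) :
    star (A *ᵥ x) ⬝ᵥ M *ᵥ (A *ᵥ x) = star x ⬝ᵥ (Aᴴ * M * A) *ᵥ x := by
  rw [star_mulVec, mulVec_mulVec, dotProduct_mulVec, vecMul_vecMul, dotProduct_mulVec, mul_assoc]

lemma Matrix.IsHermitian.star_dotProduct_mul_self_mulVec {A : Matrix n n R} (hA : A.IsHermitian)
    (x : n → R) : star x ⬝ᵥ (A * A) *ᵥ x = star (A *ᵥ x) ⬝ᵥ A *ᵥ x := by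
  rw [star_mulVec, ← dotProduct_mulVec, mulVec_mulVec, hA.eq]

lemma Matrix.isUnit_of_conjTranspose_mul_mul_eq [DecidableEq n] {B H : Matrix n n R}
    (hH : IsUnit H) (h : Bᴴ * H * B = H) : IsUnit B := by
  rw [isUnit_iff_isUnit_det] at hH ⊢
  refine isUnit_det_of_left_inverse (B := H⁻¹ * Bᴴ * H) ?_
  rw [mul_assoc, mul_assoc, ← mul_assoc Bᴴ, h, nonsing_inv_mul _ hH]

end ConjTranspose

section Invertibility

variable {𝕜 : Type*} [RCLike 𝕜] {n : Type*} [Fintype n] [DecidableEq n]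

lemma Matrix.isUnit_add_mul_of_conjTranspose_mul_mul_eq {A C B : Matrix n n 𝕜}
    (hA : A.IsHermitian) (hC : C.IsHermitian) (hAC : A * C = 0) (hS : IsUnit (A * A + C * C))
    (hB : Bᴴ * (A * A - C * C) * B = A * A - C * C) : IsUnit (A + C * B) := by
  have hCA : C * A = 0 := by
    simpa [conjTranspose_mul, hA.eq, hC.eq] using congrArg conjTranspose hAC
  rw [isUnit_iff_isUnit_det, isUnit_iff_ne_zero]
  intro hdet
  obtain ⟨x, hx0, hx⟩ := exists_mulVec_eq_zero_iff.mpr hdet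
  refine hx0 (mulVec_injective_iff_isUnit.mpr hS ?_)
  rw [add_mulVec, ← mulVec_mulVec] at hx
  have hCBx : C *ᵥ (B *ᵥ x) = 0 := by
    have h : (C * C) *ᵥ (B *ᵥ x) = 0 := by
      simpa [mulVec_add, mulVec_mulVec, hCA, mul_assoc] using congrArg (C *ᵥ ·) hx
    rw [← dotProduct_star_self_eq_zero, ← hC.star_dotProduct_mul_self_mulVec, h, dotProduct_zero]
  have hAx : A *ᵥ x = 0 := by rwa [hCBx, add_zero] at hx
  have hform := congrArg (fun M => star x ⬝ᵥ M *ᵥ x) hB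
  simp only [← star_mulVec_dotProduct_mulVec, sub_mulVec, dotProduct_sub,
    hA.star_dotProduct_mul_self_mulVec, hC.star_dotProduct_mul_self_mulVec, hCBx, hAx,
    dotProduct_zero, sub_zero, zero_sub] at hform
  have hCx : C *ᵥ x = 0 := by
    have h0 : star (A *ᵥ (B *ᵥ x)) ⬝ᵥ A *ᵥ (B *ᵥ x) + star (C *ᵥ x) ⬝ᵥ C *ᵥ x = 0 := by
      rw [hform, neg_add_cancel]
    exact dotProduct_star_self_eq_zero.mp ((add_eq_zero_iff_of_nonneg
      (dotProduct_star_self_nonneg _) (dotProduct_star_self_nonneg _)).mp h0).2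
  rw [add_mulVec, ← mulVec_mulVec, ← mulVec_mulVec, hAx, hCx, mulVec_zero, mulVec_zero, add_zero,
    mulVec_zero]

end Invertibility

section SpectralSplitting

variable {𝕜 : Type*} [RCLike 𝕜] {n : Type*} [Fintype n] [DecidableEq n] {H : Matrix n n 𝕜}

lemma Matrix.cfc_pPos_add_cfc_pNeg (hH : IsSelfAdjoint H) : cfc pPos H + cfc pNeg H = 1 := by
  rw [← cfc_add', ← cfc_const_one ℝ H]
  congr 1; funext t; rw [pPos, pNeg]; ring

lemma Matrix.isUnit_cfc_qPos_add_cfc_qNeg_mul (hH : IsSelfAdjoint H) (hu : IsUnit H)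
    {B : Matrix n n 𝕜} (hB : Bᴴ * H * B = H) : IsUnit (cfc qPos H + cfc qNeg H * B) := by
  have hdiff : cfc qPos H * cfc qPos H - cfc qNeg H * cfc qNeg H = H := by
    rw [← cfc_mul', ← cfc_mul', ← cfc_sub']
    conv_rhs => rw [← cfc_id' ℝ H]
    exact cfc_congr fun t _ => by rw [qPos_mul_self, qNeg_mul_self]; ring
  refine isUnit_add_mul_of_conjTranspose_mul_mul_eq (cfc_predicate _ _) (cfc_predicate _ _)
    (by rw [← cfc_mul']; simp only [qPos_mul_qNeg, cfc_const_zero]) ?_ (by rwa [hdiff])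
  rw [← cfc_mul', ← cfc_mul', ← cfc_add', isUnit_cfc_iff _ _ (H.finite_real_spectrum.continuousOn _)]
  intro t ht
  rw [qPos_mul_self, qNeg_mul_self, show 2⁻¹ * (|t| + t) + 2⁻¹ * (|t| - t) = |t| by ring]
  exact abs_ne_zero.mpr (ne_zero_of_mem_spectrum hu ht)

lemma Matrix.cfc_qPos_qNeg_sandwich_pPos (hH : IsSelfAdjoint H) (hu : IsUnit H)
    (B : Matrix n n 𝕜) :
    (cfc qPos H + cfc qNeg H * B)ᴴ * (H⁻¹ * cfc pPos H) * (cfc qPos H + cfc qNeg H * B) =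
      cfc pPos H ∧
    (cfc qPos H * B + cfc qNeg H)ᴴ * (H⁻¹ * cfc pPos H) * (cfc qPos H * B + cfc qNeg H) =
      Bᴴ * cfc pPos H * B := by
  have hA : (cfc qPos H)ᴴ = cfc qPos H := (cfc_predicate qPos H : IsSelfAdjoint _)
  have hC : (cfc qNeg H)ᴴ = cfc qNeg H := (cfc_predicate qNeg H : IsSelfAdjoint _)
  have hMC : H⁻¹ * cfc pPos H * cfc qNeg H = 0 := by
    rw [inv_mul_cfc hH hu, ← cfc_mul']; simp only [inv_mul_pPos_mul_qNeg, cfc_const_zero]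
  have hCM : (cfc qNeg H)ᴴ * (H⁻¹ * cfc pPos H) = 0 := by
    rw [hC, inv_mul_cfc hH hu, ← cfc_mul']
    simp only [mul_comm (qNeg _), inv_mul_pPos_mul_qNeg, cfc_const_zero]
  have hAMA : (cfc qPos H)ᴴ * (H⁻¹ * cfc pPos H) * cfc qPos H = cfc pPos H := by
    rw [hA, inv_mul_cfc hH hu, ← cfc_mul', ← cfc_mul']
    exact cfc_congr fun t ht => qPos_mul_inv_mul_pPos_mul_qPos (ne_zero_of_mem_spectrum hu ht)
  exact ⟨(conjTranspose_add_mul_mul_add_mul B hMC hCM).trans hAMA,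
    by rw [conjTranspose_mul_add_mul_mul_add B hMC hCM, hAMA]⟩

lemma Matrix.cfc_qPos_qNeg_sandwich_pNeg (hH : IsSelfAdjoint H) (hu : IsUnit H)
    (B : Matrix n n 𝕜) :
    (cfc qPos H + cfc qNeg H * B)ᴴ * (H⁻¹ * cfc pNeg H) * (cfc qPos H + cfc qNeg H * B) =
      -(Bᴴ * cfc pNeg H * B) ∧
    (cfc qPos H * B + cfc qNeg H)ᴴ * (H⁻¹ * cfc pNeg H) * (cfc qPos H * B + cfc qNeg H) =
      -cfc pNeg H := by
  have hA : (cfc qPos H)ᴴ = cfc qPos H := (cfc_predicate qPos H : IsSelfAdjoint _)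
  have hC : (cfc qNeg H)ᴴ = cfc qNeg H := (cfc_predicate qNeg H : IsSelfAdjoint _)
  have hMA : H⁻¹ * cfc pNeg H * cfc qPos H = 0 := by
    rw [inv_mul_cfc hH hu, ← cfc_mul']; simp only [inv_mul_pNeg_mul_qPos, cfc_const_zero]
  have hAM : (cfc qPos H)ᴴ * (H⁻¹ * cfc pNeg H) = 0 := by
    rw [hA, inv_mul_cfc hH hu, ← cfc_mul']
    simp only [mul_comm (qPos _), inv_mul_pNeg_mul_qPos, cfc_const_zero]
  have hCMC : (cfc qNeg H)ᴴ * (H⁻¹ * cfc pNeg H) * cfc qNeg H = -cfc pNeg H := by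
    rw [hC, inv_mul_cfc hH hu, ← cfc_mul', ← cfc_mul', ← cfc_neg]
    exact cfc_congr fun t ht => qNeg_mul_inv_mul_pNeg_mul_qNeg (ne_zero_of_mem_spectrum hu ht)
  rw [add_comm (cfc qPos H), add_comm _ (cfc qNeg H)]
  exact ⟨by rw [conjTranspose_mul_add_mul_mul_add B hMA hAM, hCMC, mul_neg, neg_mul],
    (conjTranspose_add_mul_mul_add_mul B hMA hAM).trans hCMC⟩

end SpectralSplitting

section Estimates

variable {d : ℕ}

lemma euclNormC_mulVec_le (A : Matrix (Fin d) (Fin d) ℂ) (x : Fin d → ℂ) :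
    euclNormC (A *ᵥ x) ≤ specNormC A * euclNormC x :=
  (toEuclideanCLM (𝕜 := ℂ) A).le_opNorm _

lemma sq_euclNormC_mulVec_le (A : Matrix (Fin d) (Fin d) ℂ) (x : Fin d → ℂ) :
    euclNormC (A *ᵥ x) ^ 2 ≤ specNormC A ^ 2 * euclNormC x ^ 2 := by
  rw [← mul_pow]
  exact pow_le_pow_left₀ (norm_nonneg _) (euclNormC_mulVec_le A x) 2

lemma re_star_dotProduct_self (x : Fin d → ℂ) : (star x ⬝ᵥ x).re = euclNormC x ^ 2 := by
  rw [euclNormC, EuclideanSpace.norm_sq_eq]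
  simp [dotProduct, Complex.re_sum, Complex.sq_norm, Complex.normSq_apply]

lemma sq_euclNormC_le_of_sandwich {B V W Mp Mm Ep Em : Matrix (Fin d) (Fin d) ℂ}
    (hB : IsUnit B) (hV : IsUnit V) (hE : Ep + Em = 1)
    (hVp : Vᴴ * Mp * V = Ep) (hWm : Wᴴ * Mm * W = -Em)
    (hWp : Wᴴ * Mp * W = Bᴴ * Ep * B) (hVm : Vᴴ * Mm * V = -(Bᴴ * Em * B)) (y : Fin d → ℂ) :
    euclNormC y ^ 2 ≤ specNormC V ^ 2 *
      ((star y ⬝ᵥ Mp *ᵥ y).re + -(star ((W * V⁻¹) *ᵥ y) ⬝ᵥ Mm *ᵥ ((W * V⁻¹) *ᵥ y)).re) ∧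
    euclNormC y ^ 2 ≤ specNormC B⁻¹ ^ 2 * specNormC V ^ 2 *
      ((star ((W * V⁻¹) *ᵥ y) ⬝ᵥ Mp *ᵥ ((W * V⁻¹) *ᵥ y)).re + -(star y ⬝ᵥ Mm *ᵥ y).re) := by
  rw [isUnit_iff_isUnit_det] at hB hV
  obtain ⟨x, rfl⟩ : ∃ x, V *ᵥ x = y :=
    ⟨V⁻¹ *ᵥ y, by rw [mulVec_mulVec, mul_nonsing_inv _ hV, one_mulVec]⟩
  have hWx : (W * V⁻¹) *ᵥ (V *ᵥ x) = W *ᵥ x := by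
    rw [mulVec_mulVec, mul_assoc, nonsing_inv_mul _ hV, mul_one]
  have form (X M E : Matrix (Fin d) (Fin d) ℂ) (h : Xᴴ * M * X = E) :
      (star (X *ᵥ x) ⬝ᵥ M *ᵥ (X *ᵥ x)).re = (star x ⬝ᵥ E *ᵥ x).re := by
    rw [star_mulVec_dotProduct_mulVec, h]
  have hBE : Bᴴ * Ep * B + Bᴴ * Em * B = Bᴴ * 1 * B := by rw [← hE]; noncomm_ring
  have h1 : (star (V *ᵥ x) ⬝ᵥ Mp *ᵥ (V *ᵥ x)).re + -(star (W *ᵥ x) ⬝ᵥ Mm *ᵥ (W *ᵥ x)).re =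
      euclNormC x ^ 2 := by
    rw [form V Mp _ hVp, form W Mm _ hWm, neg_mulVec, dotProduct_neg, Complex.neg_re, neg_neg,
      ← Complex.add_re, ← dotProduct_add, ← add_mulVec, hE, one_mulVec, re_star_dotProduct_self]
  have h2 : (star (W *ᵥ x) ⬝ᵥ Mp *ᵥ (W *ᵥ x)).re + -(star (V *ᵥ x) ⬝ᵥ Mm *ᵥ (V *ᵥ x)).re =
      euclNormC (B *ᵥ x) ^ 2 := by
    rw [form W Mp _ hWp, form V Mm _ hVm, neg_mulVec, dotProduct_neg, Complex.neg_re, neg_neg,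
      ← Complex.add_re, ← dotProduct_add, ← add_mulVec, hBE, ← star_mulVec_dotProduct_mulVec,
      one_mulVec, re_star_dotProduct_self]
  rw [hWx, h1, h2]
  refine ⟨sq_euclNormC_mulVec_le V x, ?_⟩
  have hx : euclNormC x ^ 2 ≤ specNormC B⁻¹ ^ 2 * euclNormC (B *ᵥ x) ^ 2 := by
    simpa only [mulVec_mulVec, nonsing_inv_mul _ hB, one_mulVec] using
      sq_euclNormC_mulVec_le B⁻¹ (B *ᵥ x)
  calc euclNormC (V *ᵥ x) ^ 2 ≤ specNormC V ^ 2 * euclNormC x ^ 2 := sq_euclNormC_mulVec_le V x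
    _ ≤ specNormC V ^ 2 * (specNormC B⁻¹ ^ 2 * euclNormC (B *ᵥ x) ^ 2) := by gcongr
    _ = specNormC B⁻¹ ^ 2 * specNormC V ^ 2 * euclNormC (B *ᵥ x) ^ 2 := by ring

end Estimates

/-- **Proposition 5.5 (c).** With `B* P₁ B = P₁`, `V := Q₊ + Q₋ B` and
`U := (Q₊ B + Q₋) V⁻¹`, one has for all `y ∈ ℂ^d`:
`‖y‖² ≤ ‖V‖² (n₊(y)² + n₋(Uy)²)` and `‖y‖² ≤ ‖B⁻¹‖² ‖V‖² (n₊(Uy)² + n₋(y)²)`,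
where `n₊(z)² = ⟨P₁⁻¹P₊ z, z⟩` and `n₋(z)² = −⟨P₁⁻¹P₋ z, z⟩`. -/
theorem stmt_10 {d : ℕ} (P1 absP1 Qp Qm Pp Pm : Matrix (Fin d) (Fin d) ℝ)
    (hP1symm : P1.IsSymm) (hP1inv : IsUnit P1.det)
    (habs : absP1.PosDef) (habs2 : absP1 ^ 2 = P1 ^ 2)
    (hQp : Qp.PosSemidef) (hQp2 : Qp ^ 2 = (2 : ℝ)⁻¹ • (absP1 + P1))
    (hQm : Qm.PosSemidef) (hQm2 : Qm ^ 2 = (2 : ℝ)⁻¹ • (absP1 - P1))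
    (hPp : Pp = (2 : ℝ)⁻¹ • ((1 : Matrix (Fin d) (Fin d) ℝ) + absP1⁻¹ * P1))
    (hPm : Pm = (2 : ℝ)⁻¹ • ((1 : Matrix (Fin d) (Fin d) ℝ) - absP1⁻¹ * P1))
    (B : Matrix (Fin d) (Fin d) ℂ)
    (hB : Bᴴ * (P1.map Complex.ofReal) * B = P1.map Complex.ofReal)
    (V U : Matrix (Fin d) (Fin d) ℂ)
    (hV : V = Qp.map Complex.ofReal + (Qm.map Complex.ofReal) * B)
    (hU : U = (Qp.map Complex.ofReal * B + Qm.map Complex.ofReal) * V⁻¹)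
    -- squared `E₊`- and `E₋`-norms
    (np2 nm2 : (Fin d → ℂ) → ℝ)
    (hnp2 : ∀ z, np2 z = (star z ⬝ᵥ ((P1.map Complex.ofReal)⁻¹ *
      Pp.map Complex.ofReal).mulVec z).re)
    (hnm2 : ∀ z, nm2 z = -(star z ⬝ᵥ ((P1.map Complex.ofReal)⁻¹ *
      Pm.map Complex.ofReal).mulVec z).re) :
    ∀ y : Fin d → ℂ,
      euclNormC y ^ 2 ≤ specNormC V ^ 2 * (np2 y + nm2 (U.mulVec y)) ∧
      euclNormC y ^ 2 ≤
        specNormC B⁻¹ ^ 2 * specNormC V ^ 2 * (np2 (U.mulVec y) + nm2 y) := by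
  have hP : P1.IsHermitian := (conjTranspose_eq_transpose_of_trivial P1).trans hP1symm
  have hPu : IsUnit P1 := (isUnit_iff_isUnit_det P1).mpr hP1inv
  have hS : absP1 = cfc (fun t : ℝ => |t|) P1 := eq_cfc_abs_of_sq_eq_sq hP habs.posSemidef habs2
  rw [hS] at hQp2 hQm2 hPp hPm
  have hc (f : ℝ → ℝ) : (cfc f P1).map Complex.ofReal = cfc f (P1.map Complex.ofReal) :=
    map_ofReal_cfc f hP
  rw [eq_cfc_qPos hP hQp hQp2, eq_cfc_qNeg hP hQm hQm2, hc, hc] at hV hU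
  rw [hPp, ← cfc_pPos hP hPu, hc] at hnp2
  rw [hPm, ← cfc_pNeg hP hPu, hc] at hnm2
  set H := P1.map Complex.ofReal
  have hH : IsSelfAdjoint H := hP.map _ fun r => (Complex.conj_ofReal r).symm
  have hHu : IsUnit H := hPu.map Complex.ofRealHom.mapMatrix
  obtain ⟨hVp, hWp⟩ := cfc_qPos_qNeg_sandwich_pPos hH hHu B
  obtain ⟨hVm, hWm⟩ := cfc_qPos_qNeg_sandwich_pNeg hH hHu B
  intro y
  simp only [hnp2, hnm2]
  subst hV hU
  exact sq_euclNormC_le_of_sandwich (isUnit_of_conjTranspose_mul_mul_eq hHu hB)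
    (isUnit_cfc_qPos_add_cfc_qNeg_mul hH hHu hB) (cfc_pPos_add_cfc_pNeg hH) hVp hWm hWp hVm y

end
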